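/- Suppose g admits the resolvent representation g(x,i) = Σ_{k=1}^n 2p_k ∫₀^∞ g_r((x,i),(y,k)) f_k(y) dy + (1/θ)·e^{−θx}·Δ₀. Then for every leg i the right derivative g⁺(0,i) := lim_{δ↓0} (g(δ,i) − g(0,i))/δ exists, and Δ₀ = −Σ_{i=1}^n p_i · g⁺(0,i). -/

import Mathlib

/-! On a leg `i` the Green function splits as
`g_r((x,i),(y,k)) = θ⁻¹ e^{-θx} e^{-θy} + [i = k] (θ p_i)⁻¹ (sinh(θx) e^{-θy} - sinh(θ(x-y))⁺)`,
so with `L_k = ∫₀^∞ e^{-θy} f_k(y) dy`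
`g(x,i) = θ⁻¹ e^{-θx} (2 Σ_k p_k L_k + Δ₀) + 2θ⁻¹ (sinh(θx) L_i - ∫₀ˣ sinh(θ(x-y)) f_i(y) dy)`.
The convolution term is `O(x²)` at `0` because `f_i` is bounded near `0`, hence
`g⁺(0,i) = 2 L_i - 2 Σ_k p_k L_k - Δ₀`, and averaging over `p` leaves `-Δ₀`. -/

open Filter Topology MeasureTheory

/-- Green function of the Brownian spider with `n` legs, weights `p`, and `θ = √(2r)`. -/
noncomputable def spiderGreen (n : ℕ) (p : Fin n → ℝ) (θ : ℝ)
    (x : ℝ) (i : Fin n) (y : ℝ) (j : Fin n) : ℝ :=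
  if i = j then
    (1/θ) * Real.exp (-θ * max x y) *
      ((1 / p i) * Real.sinh (θ * min x y) + Real.exp (-θ * min x y))
  else (1/θ) * Real.exp (-θ * x) * Real.exp (-θ * y)

open Set Real

/-- `sinhConv θ f x = ∫₀ˣ sinh (θ (x - y)) f y dy` for `θ ≥ 0`. -/
noncomputable def sinhConv (θ : ℝ) (f : ℝ → ℝ) (x : ℝ) : ℝ :=
  ∫ y in Ioi 0, max 0 (sinh (θ * (x - y))) * f y

section sinhConv

variable {θ x y C : ℝ} {f : ℝ → ℝ}

lemma max_zero_sinh_mul_sub_of_le (hθ : 0 ≤ θ) (h : x ≤ y) :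
    max 0 (sinh (θ * (x - y))) = 0 :=
  max_eq_left (sinh_nonpos_iff.mpr (mul_nonpos_of_nonneg_of_nonpos hθ (by linarith)))

lemma integrableOn_Ioc_indicator_const (x c : ℝ) :
    IntegrableOn ((Ioc 0 x).indicator fun _ => c) (Ioi 0) :=
  (integrableOn_const measure_Ioc_lt_top.ne).integrable_indicator measurableSet_Ioc

lemma norm_sinhKernel_mul_le (hθ : 0 ≤ θ) (hC : ∀ y ∈ Icc 0 x, |f y| ≤ C) (hy : 0 < y) :
    ‖max 0 (sinh (θ * (x - y))) * f y‖ ≤ (Ioc 0 x).indicator (fun _ => sinh (θ * x) * C) y := by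
  by_cases hyx : y ≤ x
  · have hsinh : 0 ≤ sinh (θ * x) := sinh_nonneg_iff.mpr (by nlinarith)
    rw [indicator_of_mem (show y ∈ Ioc 0 x from ⟨hy, hyx⟩), norm_mul,
      Real.norm_of_nonneg (le_max_left _ _)]
    refine mul_le_mul (max_le hsinh (sinh_le_sinh.mpr (by nlinarith))) (hC y ⟨hy.le, hyx⟩)
      (norm_nonneg _) hsinh
  · rw [max_zero_sinh_mul_sub_of_le hθ (not_le.mp hyx).le, zero_mul, norm_zero,
      indicator_of_notMem (fun h => hyx h.2)]

lemma integrableOn_sinhKernel_mul (hθ : 0 ≤ θ) (hf : Measurable f)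
    (hC : ∀ y ∈ Icc 0 x, |f y| ≤ C) :
    IntegrableOn (fun y => max 0 (sinh (θ * (x - y))) * f y) (Ioi 0) := by
  refine Integrable.mono' (integrableOn_Ioc_indicator_const x (sinh (θ * x) * C))
    (by fun_prop) ?_
  filter_upwards [ae_restrict_mem measurableSet_Ioi] with y hy
  exact norm_sinhKernel_mul_le hθ hC hy

lemma abs_sinhConv_le (hθ : 0 ≤ θ) (hx : 0 ≤ x) (hC : ∀ y ∈ Icc 0 x, |f y| ≤ C) :
    |sinhConv θ f x| ≤ sinh (θ * x) * C * x := by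
  calc |sinhConv θ f x|
      ≤ ∫ y in Ioi 0, (Ioc 0 x).indicator (fun _ => sinh (θ * x) * C) y := by
        rw [← Real.norm_eq_abs, sinhConv]
        refine norm_integral_le_of_norm_le
          (integrableOn_Ioc_indicator_const x (sinh (θ * x) * C)) ?_
        filter_upwards [ae_restrict_mem measurableSet_Ioi] with y hy
        exact norm_sinhKernel_mul_le hθ hC hy
    _ = sinh (θ * x) * C * x := by
        rw [setIntegral_indicator measurableSet_Ioc, inter_eq_right.mpr Ioc_subset_Ioi_self,
          setIntegral_const, Real.volume_real_Ioc_of_le hx, smul_eq_mul]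
        ring

lemma hasDerivWithinAt_sinhConv (hθ : 0 ≤ θ) (hC : ∀ y ∈ Icc 0 1, |f y| ≤ C) :
    HasDerivWithinAt (sinhConv θ f) 0 (Ioi 0) 0 := by
  have hC' : ∀ x ∈ Icc (0 : ℝ) 1, ∀ y ∈ Icc 0 x, |f y| ≤ C :=
    fun x hx y hy => hC y ⟨hy.1, hy.2.trans hx.2⟩
  have h0 : sinhConv θ f 0 = 0 :=
    abs_nonpos_iff.mp (by simpa using abs_sinhConv_le hθ le_rfl (hC' 0 ⟨le_rfl, zero_le_one⟩))
  rw [hasDerivWithinAt_iff_tendsto_slope' self_notMem_Ioi]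
  have hlim : Tendsto (fun δ => sinh (θ * δ) * C) (𝓝[>] 0) (𝓝 0) := by
    have : Continuous fun δ => sinh (θ * δ) * C := by fun_prop
    simpa using (this.tendsto 0).mono_left nhdsWithin_le_nhds
  refine squeeze_zero_norm' ?_ hlim
  filter_upwards [Ioc_mem_nhdsGT zero_lt_one] with δ hδ
  rw [slope_def_field, h0, sub_zero, sub_zero, norm_div, Real.norm_of_nonneg hδ.1.le,
    div_le_iff₀ hδ.1]
  exact abs_sinhConv_le hθ hδ.1.le (hC' δ (Ioc_subset_Icc_self hδ))

end sinhConv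

lemma spiderGreen_eq {n : ℕ} (p : Fin n → ℝ) {θ : ℝ} (hθ : 0 ≤ θ) (x : ℝ) (i : Fin n)
    (y : ℝ) (k : Fin n) :
    spiderGreen n p θ x i y k = 1 / θ * (exp (-θ * x) * exp (-θ * y) +
      if i = k then 1 / p i * (sinh (θ * x) * exp (-θ * y) - max 0 (sinh (θ * (x - y))))
      else 0) := by
  unfold spiderGreen
  split_ifs with hik
  · rcases le_total x y with h | h
    · rw [max_eq_right h, min_eq_left h, max_zero_sinh_mul_sub_of_le hθ h]
      ring
    · rw [max_eq_left h, min_eq_right h,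
        max_eq_right (sinh_nonneg_iff.mpr (mul_nonneg hθ (sub_nonneg.mpr h)))]
      have hsinh : exp (-θ * x) * sinh (θ * y) =
          sinh (θ * x) * exp (-θ * y) - sinh (θ * (x - y)) := by
        simp only [sinh_eq, mul_sub, neg_mul, exp_neg, exp_sub]
        field_simp
        ring
      linear_combination (1 / θ * (1 / p i)) * hsinh
  · ring

lemma integrableOn_exp_mul {θ : ℝ} {f : ℝ → ℝ} (hf : Measurable f)
    (hfθ : IntegrableOn (fun y => exp (-θ * y) * |f y|) (Ioi 0)) :
    IntegrableOn (fun y => exp (-θ * y) * f y) (Ioi 0) :=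
  hfθ.mono' (by fun_prop) (.of_forall fun y => by
    rw [norm_mul, Real.norm_of_nonneg (exp_pos _).le, Real.norm_eq_abs])

lemma integral_spiderGreen_mul {n : ℕ} (p : Fin n → ℝ) {θ x C : ℝ} (hθ : 0 ≤ θ) {f : ℝ → ℝ}
    (hf : Measurable f) (hC : ∀ y ∈ Icc 0 x, |f y| ≤ C)
    (hfθ : IntegrableOn (fun y => exp (-θ * y) * |f y|) (Ioi 0)) (i k : Fin n) :
    ∫ y in Ioi 0, spiderGreen n p θ x i y k * f y =
      1 / θ * (exp (-θ * x) * (∫ y in Ioi 0, exp (-θ * y) * f y) +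
        if i = k then 1 / p i * (sinh (θ * x) * (∫ y in Ioi 0, exp (-θ * y) * f y) -
          sinhConv θ f x) else 0) := by
  have hL := integrableOn_exp_mul hf hfθ
  have hS := integrableOn_sinhKernel_mul hθ hf hC
  simp_rw [spiderGreen_eq p hθ]
  split_ifs
  · have hsplit : ∀ y, 1 / θ * (exp (-θ * x) * exp (-θ * y) + 1 / p i *
        (sinh (θ * x) * exp (-θ * y) - max 0 (sinh (θ * (x - y))))) * f y =
        1 / θ * (exp (-θ * x) * (exp (-θ * y) * f y) + 1 / p i *
          (sinh (θ * x) * (exp (-θ * y) * f y) - max 0 (sinh (θ * (x - y))) * f y)) :=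
      fun y => by ring
    simp_rw [hsplit]
    rw [integral_const_mul,
      integral_add (hL.const_mul _) (((hL.const_mul _).sub' hS).const_mul _),
      integral_const_mul, integral_const_mul, integral_sub (hL.const_mul _) hS, integral_const_mul]
    rfl
  · simp_rw [add_zero, mul_assoc, integral_const_mul]

lemma sum_integral_spiderGreen_mul {n : ℕ} {p : Fin n → ℝ} {i : Fin n} (hpi : p i ≠ 0)
    {θ x : ℝ} (hθ : 0 ≤ θ) {f : Fin n → ℝ → ℝ} (hf_meas : ∀ k, Measurable (f k))
    (hf_bdd : ∀ k, ∃ C, ∀ y ∈ Icc 0 x, |f k y| ≤ C)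
    (hf_int : ∀ k, IntegrableOn (fun y => exp (-θ * y) * |f k y|) (Ioi 0)) :
    ∑ k, 2 * p k * ∫ y in Ioi 0, spiderGreen n p θ x i y k * f k y =
      2 / θ * (exp (-θ * x) * ∑ k, p k * ∫ y in Ioi 0, exp (-θ * y) * f k y) +
        2 / θ * (sinh (θ * x) * (∫ y in Ioi 0, exp (-θ * y) * f i y) - sinhConv θ (f i) x) := by
  have hterm : ∀ k, 2 * p k * ∫ y in Ioi 0, spiderGreen n p θ x i y k * f k y =
      2 / θ * (exp (-θ * x) * (p k * ∫ y in Ioi 0, exp (-θ * y) * f k y)) +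
        if i = k then 2 / θ * (sinh (θ * x) * (∫ y in Ioi 0, exp (-θ * y) * f i y) -
          sinhConv θ (f i) x) else 0 := by
    intro k
    obtain ⟨C, hC⟩ := hf_bdd k
    rw [integral_spiderGreen_mul p hθ (hf_meas k) hC (hf_int k)]
    split_ifs with hik
    · subst hik
      field_simp
    · ring
  rw [Finset.sum_congr rfl fun k _ => hterm k, Finset.sum_add_distrib, ← Finset.mul_sum,
    ← Finset.mul_sum, Finset.sum_ite_eq Finset.univ i, if_pos (Finset.mem_univ i)]

theorem stmt_13_general (n : ℕ) (p : Fin n → ℝ)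
    (hp : ∀ k, 0 < p k) (hpsum : ∑ k, p k = 1)
    (r : ℝ) (hr : 0 < r) (θ : ℝ) (hθ : θ = Real.sqrt (2 * r))
    (f : Fin n → ℝ → ℝ) (hf_meas : ∀ k, Measurable (f k))
    (hf_locbdd : ∀ k, ∀ K : ℝ, ∃ C, ∀ y ∈ Set.Icc (0:ℝ) K, |f k y| ≤ C)
    (hf_int : ∀ k, IntegrableOn (fun y => Real.exp (-θ * y) * |f k y|) (Set.Ioi 0))
    (Δ₀ : ℝ) (g : ℝ → Fin n → ℝ)
    (hrep : ∀ x ≥ (0:ℝ), ∀ i, g x i =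
      (∑ k, 2 * p k * ∫ y in Set.Ioi (0:ℝ), spiderGreen n p θ x i y k * f k y) +
        (1/θ) * Real.exp (-θ * x) * Δ₀) :
    ∃ d : Fin n → ℝ,
      (∀ i, Tendsto (fun δ => (g δ i - g 0 i) / δ) (𝓝[>] 0) (𝓝 (d i))) ∧
      Δ₀ = -∑ i, p i * d i := by
  have hθ0 : 0 < θ := hθ ▸ Real.sqrt_pos.mpr (by positivity)
  set L : Fin n → ℝ := fun k => ∫ y in Ioi 0, exp (-θ * y) * f k y
  set A := 2 * ∑ k, p k * L k + Δ₀
  have hg : ∀ i, ∀ x ≥ 0, g x i =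
      1 / θ * (exp (-θ * x) * A) + 2 / θ * (sinh (θ * x) * L i - sinhConv θ (f i) x) := by
    intro i x hx
    rw [hrep x hx i, sum_integral_spiderGreen_mul (hp i).ne' hθ0.le hf_meas
      (fun k => hf_locbdd k x) hf_int]
    ring
  refine ⟨fun i => 2 * L i - A, fun i => ?_, ?_⟩
  · obtain ⟨C, hC⟩ := hf_locbdd i 1
    have hexp : HasDerivAt (fun x => exp (-θ * x)) (-θ) 0 := by
      simpa using ((hasDerivAt_id (0 : ℝ)).const_mul (-θ)).exp
    have hsinh : HasDerivAt (fun x => sinh (θ * x)) θ 0 := by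
      simpa using ((hasDerivAt_id (0 : ℝ)).const_mul θ).sinh
    have hF := ((hexp.mul_const A).hasDerivWithinAt.const_mul (1 / θ)).add
      (((hsinh.mul_const (L i)).hasDerivWithinAt.sub
        (hasDerivWithinAt_sinhConv hθ0.le hC)).const_mul (2 / θ))
    have hgi := hF.congr (fun x hx => hg i x hx.le) (hg i 0 le_rfl)
    rw [hasDerivWithinAt_iff_tendsto_slope' self_notMem_Ioi] at hgi
    convert hgi using 2 with δ
    · simp [slope_def_field]
    · field_simp
      ring
  · simp only [mul_sub, Finset.sum_sub_distrib, ← Finset.sum_mul, hpsum, one_mul,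
      mul_left_comm _ (2 : ℝ), ← Finset.mul_sum, A]
    ring

/-- if `g` admits the resolvent representation
`g(x,i) = Σ_k 2p_k ∫₀^∞ g_r((x,i),(y,k)) f_k(y) dy + (1/θ)e^{−θx}·Δ₀`, then the right
derivatives `g⁺(0,i)` exist and `Δ₀ = −Σ p_i g⁺(0,i)`. -/
theorem stmt_13 (n : ℕ) (hn : 1 ≤ n) (p : Fin n → ℝ)
    (hp : ∀ k, 0 < p k) (hpsum : ∑ k, p k = 1)
    (r : ℝ) (hr : 0 < r) (θ : ℝ) (hθ : θ = Real.sqrt (2 * r))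
    (f : Fin n → ℝ → ℝ) (hf_meas : ∀ k, Measurable (f k))
    (hf_locbdd : ∀ k, ∀ K : ℝ, ∃ C, ∀ y ∈ Set.Icc (0:ℝ) K, |f k y| ≤ C)
    (hf_int : ∀ k, IntegrableOn (fun y => Real.exp (-θ * y) * |f k y|) (Set.Ioi 0))
    (Δ₀ : ℝ) (g : ℝ → Fin n → ℝ)
    (hrep : ∀ x ≥ (0:ℝ), ∀ i, g x i =
      (∑ k, 2 * p k * ∫ y in Set.Ioi (0:ℝ), spiderGreen n p θ x i y k * f k y) +
        (1/θ) * Real.exp (-θ * x) * Δ₀) :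
    ∃ d : Fin n → ℝ,
      (∀ i, Tendsto (fun δ => (g δ i - g 0 i) / δ) (𝓝[>] 0) (𝓝 (d i))) ∧
      Δ₀ = -∑ i, p i * d i :=
  stmt_13_general n p hp hpsum r hr θ hθ f hf_meas hf_locbdd hf_int Δ₀ g hrep
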